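/- arXiv:1307.0597 — 2 statements merged into one kernel-verified Lean document; each statement's English description precedes it below -/
import Mathlib

section
/- Let U be a unit-candidate contained in a homogeneous part A of a network satisfying the standing assumptions, and let B be any homogeneous part. Then exactly one of the following holds: either Δ i h = 0 for every i ∈ U and every h ∈ B (this case necessarily occurs when B = A), or there exist a unique i ∈ U and a real number c ≠ 0 such that Δ i h = c for every h ∈ B, and Δ j h = 0 for every j ∈ U with j ≠ i and every h ∈ B. (Proposition 'Units', part (iv): existence and uniqueness of the inter-unit weight Δ_{U,B}.) -/
namespace NeuralNet

open Classical

/-- Neurons `i` and `j` are *structurally identical*: `i = j`, or else the intrinsic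
dynamics labels coincide, the mutual synaptic actions vanish, and every other neuron
acts equally on both. -/
def StructId {α : Type*} {N : ℕ} (F : Fin N → α) (Δ : Fin N → Fin N → ℝ)
    (i j : Fin N) : Prop :=
  i = j ∨ (F i = F j ∧ Δ i j = 0 ∧ Δ j i = 0 ∧ ∀ h, h ≠ i → h ≠ j → Δ h i = Δ h j)

/-- A *homogeneous part* is an equivalence class of the structural-identity relation. -/
def IsHomPart {α : Type*} {N : ℕ} (F : Fin N → α) (Δ : Fin N → Fin N → ℝ)
    (A : Set (Fin N)) : Prop :=
  ∃ i, A = {j | StructId F Δ i j}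

/-- A subset `U` of a homogeneous part `A` is a *unit-candidate* if for every neuron
`h ∉ A` there is at most one `i ∈ U` with `Δ i h ≠ 0`. -/
def UnitCandidate {N : ℕ} (Δ : Fin N → Fin N → ℝ) (A U : Set (Fin N)) : Prop :=
  U ⊆ A ∧ ∀ h ∉ A, ∀ i ∈ U, ∀ j ∈ U, Δ i h ≠ 0 → Δ j h ≠ 0 → i = j

/-- A partition of the homogeneous part `A` into nonempty unit-candidates. -/
def IsUnitPartition {N : ℕ} (Δ : Fin N → Fin N → ℝ) (A : Set (Fin N))
    (P : Set (Set (Fin N))) : Prop :=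
  (∀ U ∈ P, U.Nonempty ∧ UnitCandidate Δ A U) ∧ P.PairwiseDisjoint id ∧ ⋃₀ P = A

/-- A *synaptical unit* is a member of a partition of some homogeneous part `A` into
nonempty unit-candidates whose number of parts is minimal. -/
def IsSynapticalUnit {α : Type*} {N : ℕ} (F : Fin N → α) (Δ : Fin N → Fin N → ℝ)
    (U : Set (Fin N)) : Prop :=
  ∃ A P, IsHomPart F Δ A ∧ IsUnitPartition Δ A P ∧
    (∀ Q, IsUnitPartition Δ A Q → P.ncard ≤ Q.ncard) ∧ U ∈ P

/-- `deltaIB Δ i B` : the common value of `Δ i h` over `h ∈ B` (defined by choice of a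
representative of `B`; it is well-defined when `B` is a homogeneous part). -/
noncomputable def deltaIB {N : ℕ} (Δ : Fin N → Fin N → ℝ) (i : Fin N)
    (B : Set (Fin N)) : ℝ :=
  if hB : B.Nonempty then Δ i hB.choose else 0

/-- `deltaUB Δ U B` : the inter-unit weight `Δ_{U,B}`; it is `0` if `deltaIB Δ i B = 0`
for every `i ∈ U`, and otherwise the value `deltaIB Δ i B` for a chosen `i ∈ U` with
nonzero value (unique when `U` is a unit-candidate and `B` a homogeneous part). -/
noncomputable def deltaUB {N : ℕ} (Δ : Fin N → Fin N → ℝ) (U B : Set (Fin N)) : ℝ :=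
  if h : ∃ i ∈ U, deltaIB Δ i B ≠ 0 then deltaIB Δ h.choose B else 0

/-- Neuron `i` is *excitatory*. -/
def Excitatory {N : ℕ} (Δ : Fin N → Fin N → ℝ) (i : Fin N) : Prop :=
  (∀ j, 0 ≤ Δ i j) ∧ ∃ j, 0 < Δ i j

/-- Neuron `i` is *inhibitory*. -/
def Inhibitory {N : ℕ} (Δ : Fin N → Fin N → ℝ) (i : Fin N) : Prop :=
  (∀ j, Δ i j ≤ 0) ∧ ∃ j, Δ i j < 0

/-- Neuron `i` is *mixed*. -/
def Mixed {N : ℕ} (Δ : Fin N → Fin N → ℝ) (i : Fin N) : Prop :=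
  (∃ j, 0 < Δ i j) ∧ ∃ j, Δ i j < 0

/-- The image of a homogeneous part `B` under the unit bijection `φ`: the union of the
images of the units of `P` contained in `B`. -/
def partImage {N N' : ℕ} (P : Set (Set (Fin N))) (φ : Set (Fin N) → Set (Fin N'))
    (B : Set (Fin N)) : Set (Fin N') :=
  {i' | ∃ U ∈ P, U ⊆ B ∧ i' ∈ φ U}

/-- The networks `(F, Δ)` on `Fin N` and `(F', Δ')` on `Fin N'` are *synaptically
equivalent*: there are partitions of each set of neurons into synaptical units and a
bijection `φ` between them preserving homogeneous parts, inter-unit weights, and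
intrinsic dynamics labels. -/
def SynEquiv {α : Type*} {N N' : ℕ} (F : Fin N → α) (Δ : Fin N → Fin N → ℝ)
    (F' : Fin N' → α) (Δ' : Fin N' → Fin N' → ℝ) : Prop :=
  ∃ (P : Set (Set (Fin N))) (P' : Set (Set (Fin N')))
    (φ : Set (Fin N) → Set (Fin N')),
    (∀ U ∈ P, IsSynapticalUnit F Δ U) ∧ P.PairwiseDisjoint id ∧ ⋃₀ P = Set.univ ∧
    (∀ U' ∈ P', IsSynapticalUnit F' Δ' U') ∧ P'.PairwiseDisjoint id ∧
      ⋃₀ P' = Set.univ ∧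
    Set.BijOn φ P P' ∧
    (∀ U ∈ P, ∀ V ∈ P,
      ((∃ A, IsHomPart F Δ A ∧ U ⊆ A ∧ V ⊆ A) ↔
        (∃ A', IsHomPart F' Δ' A' ∧ φ U ⊆ A' ∧ φ V ⊆ A'))) ∧
    (∀ U ∈ P, ∀ B, IsHomPart F Δ B →
      deltaUB Δ U B = deltaUB Δ' (φ U) (partImage P φ B)) ∧
    (∀ U ∈ P, ∀ i ∈ U, ∀ i' ∈ φ U, F i = F' i')

/-- The labels of the *split network* obtained by splitting the mixed neuron `i`. -/
def splitF {α : Type*} {N : ℕ} (F : Fin N → α) (i : Fin N) : Fin (N + 1) → α :=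
  fun j => if hj : (j : ℕ) < N then F ⟨j, hj⟩ else F i

/-- The synaptic actions of the *split network* obtained by splitting the mixed neuron
`i`: neuron `i` keeps the positive parts of its actions, the new neuron `N` gets the
negative parts, and the new neuron receives exactly what `i` receives. -/
def splitΔ {N : ℕ} (Δ : Fin N → Fin N → ℝ) (i : Fin N) :
    Fin (N + 1) → Fin (N + 1) → ℝ := fun j h =>
  if hj : (j : ℕ) < N then
    if hh : (h : ℕ) < N then
      if (⟨j, hj⟩ : Fin N) = i then max (Δ i ⟨h, hh⟩) 0 else Δ ⟨j, hj⟩ ⟨h, hh⟩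
    else
      if (⟨j, hj⟩ : Fin N) = i then 0 else Δ ⟨j, hj⟩ i
  else
    if hh : (h : ℕ) < N then
      if (⟨h, hh⟩ : Fin N) = i then 0 else min (Δ i ⟨h, hh⟩) 0
    else 0


/-! Structural identity is an equivalence relation, so homogeneous parts are its classes:
two of them are equal or disjoint, no neuron acts on a member of its own part, and a neuron
outside a part `B` acts on all of `B` with one common weight. If some `i₀ ∈ U` acts nontrivially
on `B`, then `B` is a part other than `A`, hence lies outside `A`; the weight of `i₀` on `B` is
a nonzero constant, and the unit-candidate condition forbids any other member of `U` to act on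
`B` at all. -/

section StructuralIdentity

variable {α : Type*} {N : ℕ} {F : Fin N → α} {Δ : Fin N → Fin N → ℝ}

theorem StructId.symm {i j : Fin N} (h : StructId F Δ i j) : StructId F Δ j i := by
  rcases h with rfl | ⟨hF, hij, hji, hext⟩
  · exact Or.inl rfl
  · exact Or.inr ⟨hF.symm, hji, hij, fun g hgj hgi => (hext g hgi hgj).symm⟩

theorem StructId.trans {i j k : Fin N} (hij : StructId F Δ i j) (hjk : StructId F Δ j k) :
    StructId F Δ i k := by
  by_cases hik : i = k
  · exact Or.inl hik
  rcases eq_or_ne i j with rfl | hij'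
  · exact hjk
  rcases eq_or_ne j k with rfl | hjk'
  · exact hij
  rcases hij with hij | ⟨hF₁, hij, hji, hext₁⟩
  · exact absurd hij hij'
  rcases hjk with hjk | ⟨hF₂, hjk, hkj, hext₂⟩
  · exact absurd hjk hjk'
  refine Or.inr ⟨hF₁.trans hF₂, ?_, ?_, fun g hgi hgk => ?_⟩
  · rw [← hext₂ i hij' hik]
    exact hij
  · rw [hext₁ k (Ne.symm hik) (Ne.symm hjk')]
    exact hkj
  · by_cases hgj : g = j
    · subst hgj
      rw [hji, hjk]
    · rw [hext₁ g hgi hgj, hext₂ g hgj hgk]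

variable {A B : Set (Fin N)}

theorem IsHomPart.nonempty (hB : IsHomPart F Δ B) : B.Nonempty := by
  obtain ⟨b, rfl⟩ := hB
  exact ⟨b, Or.inl rfl⟩

theorem IsHomPart.structId (hB : IsHomPart F Δ B) {i j : Fin N} (hi : i ∈ B) (hj : j ∈ B) :
    StructId F Δ i j := by
  obtain ⟨b, rfl⟩ := hB
  exact StructId.trans (StructId.symm hi) hj

theorem IsHomPart.eq_of_mem_of_mem (hA : IsHomPart F Δ A) (hB : IsHomPart F Δ B) {h : Fin N}
    (hhA : h ∈ A) (hhB : h ∈ B) : A = B := by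
  obtain ⟨a, rfl⟩ := hA
  obtain ⟨b, rfl⟩ := hB
  have hab : StructId F Δ a b := StructId.trans hhA (StructId.symm hhB)
  ext j
  exact ⟨fun hj => StructId.trans (StructId.symm hab) hj, fun hj => StructId.trans hab hj⟩

theorem IsHomPart.apply_eq_zero (hdiag : ∀ i, Δ i i = 0) (hB : IsHomPart F Δ B) {i h : Fin N}
    (hi : i ∈ B) (hh : h ∈ B) : Δ i h = 0 := by
  rcases hB.structId hi hh with rfl | ⟨-, hih, -, -⟩
  · exact hdiag i
  · exact hih

theorem IsHomPart.apply_eq_of_notMem (hB : IsHomPart F Δ B) {i h h' : Fin N} (hi : i ∉ B)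
    (hh : h ∈ B) (hh' : h' ∈ B) : Δ i h = Δ i h' := by
  rcases hB.structId hh hh' with rfl | ⟨-, -, -, hext⟩
  · rfl
  · exact hext i (ne_of_mem_of_not_mem hh hi).symm (ne_of_mem_of_not_mem hh' hi).symm

theorem UnitCandidate.existsUnique_of_apply_ne_zero (hdiag : ∀ i, Δ i i = 0) {U : Set (Fin N)}
    (hA : IsHomPart F Δ A) (hUA : UnitCandidate Δ A U) (hB : IsHomPart F Δ B)
    {i₀ h₀ : Fin N} (hi₀ : i₀ ∈ U) (hh₀ : h₀ ∈ B) (hne : Δ i₀ h₀ ≠ 0) :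
    ∃! i, i ∈ U ∧ ∃ c : ℝ, c ≠ 0 ∧ (∀ h ∈ B, Δ i h = c) ∧
      ∀ j ∈ U, j ≠ i → ∀ h ∈ B, Δ j h = 0 := by
  have hBA : ∀ h ∈ B, h ∉ A := fun h hh hhA =>
    hne (hA.apply_eq_zero hdiag (hUA.1 hi₀) (hA.eq_of_mem_of_mem hB hhA hh ▸ hh₀))
  have hi₀B : i₀ ∉ B := fun hi₀B => hBA i₀ hi₀B (hUA.1 hi₀)
  have hconst : ∀ h ∈ B, Δ i₀ h = Δ i₀ h₀ := fun h hh => hB.apply_eq_of_notMem hi₀B hh hh₀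
  have hothers : ∀ j ∈ U, j ≠ i₀ → ∀ h ∈ B, Δ j h = 0 := by
    intro j hj hji₀ h hh
    by_contra hjh
    exact hji₀ (hUA.2 h (hBA h hh) j hj i₀ hi₀ hjh (by rwa [hconst h hh]))
  refine ⟨i₀, ⟨hi₀, Δ i₀ h₀, hne, hconst, hothers⟩, ?_⟩
  rintro i ⟨hi, c, hc, hic, -⟩
  by_contra hii₀
  exact hc (hic h₀ hh₀ ▸ hothers i hi hii₀ h₀ hh₀)

end StructuralIdentity

theorem interunit_weight_dichotomy_general {α : Type*} {N : ℕ} (F : Fin N → α)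
    (Δ : Fin N → Fin N → ℝ) (hdiag : ∀ i, Δ i i = 0)
    (A U B : Set (Fin N)) (hA : IsHomPart F Δ A) (hUA : UnitCandidate Δ A U)
    (hB : IsHomPart F Δ B) :
    Xor' (∀ i ∈ U, ∀ h ∈ B, Δ i h = 0)
      (∃! i, i ∈ U ∧ ∃ c : ℝ, c ≠ 0 ∧ (∀ h ∈ B, Δ i h = c) ∧
        ∀ j ∈ U, j ≠ i → ∀ h ∈ B, Δ j h = 0) ∧
    (B = A → ∀ i ∈ U, ∀ h ∈ B, Δ i h = 0) := by
  refine ⟨?_, fun hBA i hi h hh => hB.apply_eq_zero hdiag (hBA ▸ hUA.1 hi) hh⟩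
  by_cases hzero : ∀ i ∈ U, ∀ h ∈ B, Δ i h = 0
  · obtain ⟨b, hb⟩ := hB.nonempty
    refine Or.inl ⟨hzero, ?_⟩
    rintro ⟨i, ⟨hi, c, hc, hic, -⟩, -⟩
    exact hc (hic b hb ▸ hzero i hi b hb)
  · push Not at hzero
    obtain ⟨i₀, hi₀, h₀, hh₀, hne⟩ := hzero
    exact Or.inr ⟨hUA.existsUnique_of_apply_ne_zero hdiag hA hB hi₀ hh₀ hne,
      fun hzero => hne (hzero i₀ hi₀ h₀ hh₀)⟩

/-- for a unit-candidate `U ⊆ A` and a homogeneous part `B`, exactly one of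
the following holds: all actions from `U` to `B` vanish (necessarily so when `B = A`),
or there is a unique `i ∈ U` acting on all of `B` with a common nonzero value `c`, while
all other members of `U` act trivially on `B`. -/
theorem interunit_weight_dichotomy {α : Type*} {N : ℕ} (F : Fin N → α)
    (Δ : Fin N → Fin N → ℝ) (hN : 2 ≤ N) (hdiag : ∀ i, Δ i i = 0) (hnind : ∀ i, ∃ j, Δ i j ≠ 0)
    (A U B : Set (Fin N)) (hA : IsHomPart F Δ A) (hUA : UnitCandidate Δ A U)
    (hB : IsHomPart F Δ B) :
    Xor' (∀ i ∈ U, ∀ h ∈ B, Δ i h = 0)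
      (∃! i, i ∈ U ∧ ∃ c : ℝ, c ≠ 0 ∧ (∀ h ∈ B, Δ i h = c) ∧
        ∀ j ∈ U, j ≠ i → ∀ h ∈ B, Δ j h = 0) ∧
    (B = A → ∀ i ∈ U, ∀ h ∈ B, Δ i h = 0) :=
  interunit_weight_dichotomy_general F Δ hdiag A U B hA hUA hB

end NeuralNet
end

section
/- If (F', Δ') on Fin N' is synaptically equivalent to (F, Δ) on Fin N (both satisfying the standing assumptions), then N' ≤ #{pairs (i, B) : i a neuron of (F, Δ), B a homogeneous part of (F, Δ), Δ_{i,B} ≠ 0}. (Upper bound on the number of neurons within a synaptical equivalence class, following from the proposition that a dynamically richer synaptically equivalent network has at least as many neurons together with the existence of the optimum.) -/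
namespace NeuralNet

open Classical

/-!
Count the pairs `(i, B)` with `Δ_{i,B} ≠ 0`. A neuron that is not indifferent acts on the
homogeneous part of any neuron it acts on, so each of the `N'` neurons of the second network
occurs in such a pair. Inside a unit-candidate at most one neuron acts on a given part, so these
pairs inject into the pairs `(U, B)` of units and parts with `Δ_{U,B} ≠ 0`. The correspondence
`φ` maps the pairs `(U, B)` of the first network onto those of the second, and in the first
network each pair `(U, B)` is witnessed by a neuron of `U`, distinct units giving distinct
neurons.
-/

section HomogeneousParts

variable {α : Type*} {N : ℕ} {F : Fin N → α} {Δ : Fin N → Fin N → ℝ}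

theorem structId_equivalence : Equivalence (StructId F Δ) where
  refl _ := Or.inl rfl
  symm := by
    rintro i j (rfl | ⟨hF, hij, hji, hΔ⟩)
    · exact Or.inl rfl
    · exact Or.inr ⟨hF.symm, hji, hij, fun h hj hi => (hΔ h hi hj).symm⟩
  trans := by
    intro i j k hij hjk
    by_cases hik : i = k
    · exact Or.inl hik
    rcases eq_or_ne i j with rfl | hij'
    · exact hjk
    rcases eq_or_ne j k with rfl | hjk'
    · exact hij
    obtain ⟨hF₁, hij, hji, hΔ₁⟩ := hij.resolve_left hij'
    obtain ⟨hF₂, hjk, hkj, hΔ₂⟩ := hjk.resolve_left hjk'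
    refine Or.inr ⟨hF₁.trans hF₂, ?_, ?_, fun h hi hk => ?_⟩
    · rwa [← hΔ₂ i hij' hik]
    · rwa [hΔ₁ k (Ne.symm hik) (Ne.symm hjk')]
    · by_cases hj : h = j
      · subst hj; rw [hji, hjk]
      · rw [hΔ₁ h hi hj, hΔ₂ h hj hk]

theorem StructId.delta_eq_zero (hdiag : ∀ i, Δ i i = 0) {i j : Fin N}
    (h : StructId F Δ i j) : Δ i j = 0 := by
  rcases h with rfl | ⟨_, h, _, _⟩
  exacts [hdiag i, h]

namespace IsHomPart

variable {A B : Set (Fin N)}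

theorem nonempty_s10 (hA : IsHomPart F Δ A) : A.Nonempty := by
  obtain ⟨i, rfl⟩ := hA
  exact ⟨i, structId_equivalence.refl i⟩

theorem structId_of_mem (hA : IsHomPart F Δ A) {i j : Fin N} (hi : i ∈ A) (hj : j ∈ A) :
    StructId F Δ i j := by
  obtain ⟨k, rfl⟩ := hA
  exact structId_equivalence.trans (structId_equivalence.symm hi) hj

theorem eq_of_mem (hA : IsHomPart F Δ A) (hB : IsHomPart F Δ B) {x : Fin N} (hxA : x ∈ A)
    (hxB : x ∈ B) : A = B := by
  have e := structId_equivalence (F := F) (Δ := Δ)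
  obtain ⟨i, rfl⟩ := hA
  obtain ⟨k, rfl⟩ := hB
  ext y
  exact ⟨e.trans (e.trans hxB (e.symm hxA)), e.trans (e.trans hxA (e.symm hxB))⟩

theorem subset_of_mem (hA : IsHomPart F Δ A) (hB : IsHomPart F Δ B) {U : Set (Fin N)}
    (hUA : U ⊆ A) {x : Fin N} (hxU : x ∈ U) (hxB : x ∈ B) : U ⊆ B :=
  hA.eq_of_mem hB (hUA hxU) hxB ▸ hUA

theorem delta_eq (hdiag : ∀ i, Δ i i = 0) (hB : IsHomPart F Δ B) (i : Fin N) {a b : Fin N}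
    (ha : a ∈ B) (hb : b ∈ B) : Δ i a = Δ i b := by
  have hab := hB.structId_of_mem ha hb
  by_cases hia : i = a
  · subst hia; rw [hdiag, hab.delta_eq_zero hdiag]
  by_cases hib : i = b
  · subst hib; rw [hdiag, (structId_equivalence.symm hab).delta_eq_zero hdiag]
  rcases hab with rfl | ⟨_, _, _, hΔ⟩
  exacts [rfl, hΔ i hia hib]

theorem deltaIB_eq (hdiag : ∀ i, Δ i i = 0) (hB : IsHomPart F Δ B) (i : Fin N) {h : Fin N}
    (hh : h ∈ B) : deltaIB Δ i B = Δ i h := by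
  rw [deltaIB, dif_pos ⟨h, hh⟩]
  exact hB.delta_eq hdiag i (Exists.choose_spec _) hh

theorem deltaIB_eq_zero_of_mem (hdiag : ∀ i, Δ i i = 0) (hB : IsHomPart F Δ B) {i : Fin N}
    (hi : i ∈ B) : deltaIB Δ i B = 0 := by
  rw [hB.deltaIB_eq hdiag i hi, hdiag]

end IsHomPart

theorem deltaUB_ne_zero_iff {U B : Set (Fin N)} :
    deltaUB Δ U B ≠ 0 ↔ ∃ i ∈ U, deltaIB Δ i B ≠ 0 := by
  rw [deltaUB]
  split_ifs with h
  exacts [iff_of_true h.choose_spec.2 h, iff_of_false (· rfl) h]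

theorem UnitCandidate.eq_of_deltaIB_ne_zero (hdiag : ∀ i, Δ i i = 0) {A U B : Set (Fin N)}
    (hA : IsHomPart F Δ A) (hU : UnitCandidate Δ A U) (hB : IsHomPart F Δ B) {i j : Fin N}
    (hi : i ∈ U) (hj : j ∈ U) (hiB : deltaIB Δ i B ≠ 0) (hjB : deltaIB Δ j B ≠ 0) : i = j := by
  obtain ⟨h, hh⟩ := hB.nonempty_s10
  -- were `h ∈ A`, then `B = A ∋ i` and `Δ_{i,B}` would vanish
  have hhA : h ∉ A := fun hhA =>
    hiB (hB.deltaIB_eq_zero_of_mem hdiag (hA.eq_of_mem hB hhA hh ▸ hU.1 hi))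
  rw [hB.deltaIB_eq hdiag _ hh] at hiB hjB
  exact hU.2 h hhA i hi j hj hiB hjB

theorem IsSynapticalUnit.nonempty_s10 {U : Set (Fin N)} (hU : IsSynapticalUnit F Δ U) :
    U.Nonempty := by
  obtain ⟨A, P, -, ⟨hP, -, -⟩, -, hUP⟩ := hU
  exact (hP U hUP).1

theorem IsSynapticalUnit.exists_unitCandidate {U : Set (Fin N)} (hU : IsSynapticalUnit F Δ U) :
    ∃ A, IsHomPart F Δ A ∧ UnitCandidate Δ A U := by
  obtain ⟨A, P, hA, ⟨hP, -, -⟩, -, hUP⟩ := hU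
  exact ⟨A, hA, (hP U hUP).2⟩

end HomogeneousParts

section Counting

variable {α : Type*} {N : ℕ} (F : Fin N → α) (Δ : Fin N → Fin N → ℝ)

def activePairs : Set (Fin N × Set (Fin N)) :=
  {p | IsHomPart F Δ p.2 ∧ deltaIB Δ p.1 p.2 ≠ 0}

def unitActivePairs (P : Set (Set (Fin N))) : Set (Set (Fin N) × Set (Fin N)) :=
  {q | q.1 ∈ P ∧ IsHomPart F Δ q.2 ∧ deltaUB Δ q.1 q.2 ≠ 0}

variable {F Δ}

theorem card_le_ncard_activePairs (hdiag : ∀ i, Δ i i = 0) (hnind : ∀ i, ∃ j, Δ i j ≠ 0) :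
    N ≤ (activePairs F Δ).ncard := by
  choose target htarget using hnind
  let part (i : Fin N) : Set (Fin N) := {k | StructId F Δ (target i) k}
  have hpart (i : Fin N) : IsHomPart F Δ (part i) := ⟨target i, rfl⟩
  calc N = (Set.univ : Set (Fin N)).ncard := by simp
    _ ≤ (activePairs F Δ).ncard := by
      refine Set.ncard_le_ncard_of_injOn (fun i => (i, part i)) (fun i _ => ⟨hpart i, ?_⟩)
        (fun i _ j _ hij => congrArg Prod.fst hij)
      rw [(hpart i).deltaIB_eq hdiag i (structId_equivalence.refl (target i))]
      exact htarget i

theorem ncard_activePairs_le_ncard_unitActivePairs (hdiag : ∀ i, Δ i i = 0)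
    {P : Set (Set (Fin N))} (hunits : ∀ U ∈ P, ∃ A, IsHomPart F Δ A ∧ UnitCandidate Δ A U)
    (hcover : ⋃₀ P = Set.univ) :
    (activePairs F Δ).ncard ≤ (unitActivePairs F Δ P).ncard := by
  choose unit hunitP hmem_unit using Set.sUnion_eq_univ_iff.mp hcover
  refine Set.ncard_le_ncard_of_injOn (fun p => (unit p.1, p.2))
    (fun p ⟨hB, hp⟩ => ⟨hunitP p.1, hB, deltaUB_ne_zero_iff.mpr ⟨p.1, hmem_unit p.1, hp⟩⟩) ?_
  rintro ⟨i, B⟩ ⟨hB, hi⟩ ⟨j, B'⟩ ⟨-, hj⟩ hij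
  obtain ⟨hunit, rfl : B = B'⟩ := Prod.mk.inj hij
  obtain ⟨A, hA, hU⟩ := hunits _ (hunitP i)
  have hj' : j ∈ unit i := hunit ▸ hmem_unit j
  rw [hU.eq_of_deltaIB_ne_zero hdiag hA hB (hmem_unit i) hj' hi hj]

theorem ncard_unitActivePairs_le_ncard_activePairs {P : Set (Set (Fin N))}
    (hdisj : P.PairwiseDisjoint id) :
    (unitActivePairs F Δ P).ncard ≤ (activePairs F Δ).ncard := by
  have hwitness (q : unitActivePairs F Δ P) : ∃ i ∈ q.1.1, deltaIB Δ i q.1.2 ≠ 0 :=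
    deltaUB_ne_zero_iff.mp q.2.2.2
  choose witness hwitness_mem hwitness_ne using hwitness
  rw [← Nat.card_coe_set_eq, ← Nat.card_coe_set_eq]
  refine Nat.card_le_card_of_injective
    (fun q => ⟨(witness q, q.1.2), q.2.2.1, hwitness_ne q⟩) ?_
  intro q r hqr
  have hwit : witness q = witness r := congrArg (fun s => s.1.1) hqr
  have hpart : q.1.2 = r.1.2 := congrArg (fun s => s.1.2) hqr
  have hunit : q.1.1 = r.1.1 := hdisj.elim q.2.1 r.2.1 <| Set.not_disjoint_iff.mpr
    ⟨_, hwitness_mem q, hwit ▸ hwitness_mem r⟩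
  exact Subtype.ext (Prod.ext hunit hpart)

end Counting

structure UnitCorrespondence {α β : Type*} {N N' : ℕ} (F : Fin N → α) (Δ : Fin N → Fin N → ℝ)
    (F' : Fin N' → β) (Δ' : Fin N' → Fin N' → ℝ) (P : Set (Set (Fin N)))
    (P' : Set (Set (Fin N'))) (φ : Set (Fin N) → Set (Fin N')) : Prop where
  units : ∀ U ∈ P, IsSynapticalUnit F Δ U
  units' : ∀ U' ∈ P', IsSynapticalUnit F' Δ' U'
  sUnion_eq' : ⋃₀ P' = Set.univ
  bijOn : Set.BijOn φ P P'
  sameHomPart_iff : ∀ U ∈ P, ∀ V ∈ P,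
    ((∃ A, IsHomPart F Δ A ∧ U ⊆ A ∧ V ⊆ A) ↔ (∃ A', IsHomPart F' Δ' A' ∧ φ U ⊆ A' ∧ φ V ⊆ A'))
  deltaUB_eq : ∀ U ∈ P, ∀ B, IsHomPart F Δ B →
    deltaUB Δ U B = deltaUB Δ' (φ U) (partImage P φ B)

namespace UnitCorrespondence

variable {α β : Type*} {N N' : ℕ} {F : Fin N → α} {Δ : Fin N → Fin N → ℝ} {F' : Fin N' → β}
  {Δ' : Fin N' → Fin N' → ℝ} {P : Set (Set (Fin N))} {P' : Set (Set (Fin N'))}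
  {φ : Set (Fin N) → Set (Fin N')}

theorem partImage_eq (h : UnitCorrespondence F Δ F' Δ' P P' φ) {V B : Set (Fin N)}
    {B' : Set (Fin N')} (hV : V ∈ P) (hB : IsHomPart F Δ B) (hB' : IsHomPart F' Δ' B')
    (hVB : V ⊆ B) (hVB' : φ V ⊆ B') : partImage P φ B = B' := by
  ext y
  constructor
  · rintro ⟨U, hU, hUB, hy⟩
    obtain ⟨A', hA', hUA', hVA'⟩ := (h.sameHomPart_iff U hU V hV).mp ⟨B, hB, hUB, hVB⟩
    obtain ⟨z, hz⟩ := (h.units' _ (h.bijOn.mapsTo hV)).nonempty_s10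
    exact hA'.eq_of_mem hB' (hVA' hz) (hVB' hz) ▸ hUA' hy
  · intro hy
    obtain ⟨W', hW', hyW'⟩ := Set.sUnion_eq_univ_iff.mp h.sUnion_eq' y
    obtain ⟨W, hW, rfl⟩ := h.bijOn.surjOn hW'
    obtain ⟨A', hA', hWA'⟩ := (h.units' _ hW').exists_unitCandidate
    have hWB' : φ W ⊆ B' := hA'.subset_of_mem hB' hWA'.1 hyW' hy
    obtain ⟨A, hA, hWA, hVA⟩ := (h.sameHomPart_iff W hW V hV).mpr ⟨B', hB', hWB', hVB'⟩
    obtain ⟨v, hv⟩ := (h.units V hV).nonempty_s10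
    exact ⟨W, hW, hA.eq_of_mem hB (hVA hv) (hVB hv) ▸ hWA, hyW'⟩

theorem exists_partImage_eq (h : UnitCorrespondence F Δ F' Δ' P P' φ) {B' : Set (Fin N')}
    (hB' : IsHomPart F' Δ' B') : ∃ B, IsHomPart F Δ B ∧ partImage P φ B = B' := by
  obtain ⟨x, hx⟩ := hB'.nonempty_s10
  obtain ⟨W', hW', hxW'⟩ := Set.sUnion_eq_univ_iff.mp h.sUnion_eq' x
  obtain ⟨A', hA', hWA'⟩ := (h.units' _ hW').exists_unitCandidate
  obtain ⟨W, hW, rfl⟩ := h.bijOn.surjOn hW'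
  obtain ⟨B, hB, hWB⟩ := (h.units W hW).exists_unitCandidate
  exact ⟨B, hB, h.partImage_eq hW hB hB' hWB.1 (hA'.subset_of_mem hB' hWA'.1 hxW' hx)⟩

theorem ncard_unitActivePairs_le (h : UnitCorrespondence F Δ F' Δ' P P' φ) :
    (unitActivePairs F' Δ' P').ncard ≤ (unitActivePairs F Δ P).ncard := by
  calc (unitActivePairs F' Δ' P').ncard
      ≤ ((fun q => (φ q.1, partImage P φ q.2)) '' unitActivePairs F Δ P).ncard :=
        Set.ncard_le_ncard ?_
    _ ≤ (unitActivePairs F Δ P).ncard := Set.ncard_image_le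
  rintro ⟨U', B'⟩ ⟨hU', hB', hne⟩
  obtain ⟨U, hU, rfl⟩ := h.bijOn.surjOn hU'
  obtain ⟨B, hB, rfl⟩ := h.exists_partImage_eq hB'
  exact ⟨(U, B), ⟨hU, hB, h.deltaUB_eq U hU B hB ▸ hne⟩, rfl⟩

end UnitCorrespondence

theorem neuron_count_upper_bound_general {α : Type*} {N N' : ℕ} (F : Fin N → α)
    (Δ : Fin N → Fin N → ℝ)
    (F' : Fin N' → α) (Δ' : Fin N' → Fin N' → ℝ)
    (hdiag' : ∀ i, Δ' i i = 0) (hnind' : ∀ i, ∃ j, Δ' i j ≠ 0)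
    (heq : SynEquiv F Δ F' Δ') :
    N' ≤ {p : Fin N × Set (Fin N) |
      IsHomPart F Δ p.2 ∧ deltaIB Δ p.1 p.2 ≠ 0}.ncard := by
  obtain ⟨P, P', φ, hP, hPdisj, -, hP', -, hP'cover, hφ, hparts, hweights, -⟩ := heq
  have hcorr : UnitCorrespondence F Δ F' Δ' P P' φ := ⟨hP, hP', hP'cover, hφ, hparts, hweights⟩
  calc N' ≤ (activePairs F' Δ').ncard := card_le_ncard_activePairs hdiag' hnind'
    _ ≤ (unitActivePairs F' Δ' P').ncard :=
      ncard_activePairs_le_ncard_unitActivePairs hdiag'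
        (fun U hU => (hP' U hU).exists_unitCandidate) hP'cover
    _ ≤ (unitActivePairs F Δ P).ncard := hcorr.ncard_unitActivePairs_le
    _ ≤ (activePairs F Δ).ncard := ncard_unitActivePairs_le_ncard_activePairs hPdisj

/-- the number of neurons of any network synaptically equivalent to
`(F, Δ)` is at most the number of pairs `(i, B)` with `Δ_{i,B} ≠ 0` in `(F, Δ)`. -/
theorem neuron_count_upper_bound {α : Type*} {N N' : ℕ} (F : Fin N → α)
    (Δ : Fin N → Fin N → ℝ) (hN : 2 ≤ N) (hdiag : ∀ i, Δ i i = 0) (hnind : ∀ i, ∃ j, Δ i j ≠ 0)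
    (F' : Fin N' → α) (Δ' : Fin N' → Fin N' → ℝ)
    (hN' : 2 ≤ N') (hdiag' : ∀ i, Δ' i i = 0) (hnind' : ∀ i, ∃ j, Δ' i j ≠ 0)
    (heq : SynEquiv F Δ F' Δ') :
    N' ≤ {p : Fin N × Set (Fin N) |
      IsHomPart F Δ p.2 ∧ deltaIB Δ p.1 p.2 ≠ 0}.ncard :=
  neuron_count_upper_bound_general F Δ F' Δ' hdiag' hnind' heq

end NeuralNet
end
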